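/- arXiv:2403.06502 — 2 statements merged into one kernel-verified Lean document; each statement's English description precedes it below -/
import Mathlib

section
/- Let f : ℝ^d → ℝ be convex with a minimizer x*, and suppose every subgradient of f at every point has Euclidean norm at most L. For ε > 0, suppose the sublevel set C(ε) = {x : f(x) ≤ f(x*) + ε} is contained in the ball B(x*, δ) for some δ > 0. Then for every x ∉ C(ε) and every subgradient g ∈ ∂f(x), the angle between -g and x* - x is at most arccos(ε/(Lδ)), which is strictly less than π/2. -/
/-!
If the ε-sublevel set of a convex `f` lies in the ball `B(x*, δ)`, then `f` grows at rate at least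
`ε / δ` away from `x*` outside that set: otherwise the point of the segment `[x*, x]` at which the
chord of `f` has risen by exactly `ε` would lie outside the ball yet inside the sublevel set.
For a subgradient `g` at such an `x`, the subgradient inequality at `x*` turns this growth into
`⟪-g, x* - x⟫ ≥ (ε / δ) ‖x* - x‖`, and `‖g‖ ≤ L` gives `cos ∠(-g, x* - x) ≥ ε / (L δ) > 0`.
-/

open InnerProductGeometry RealInnerProductSpace

theorem ConvexOn.div_mul_dist_le_sub_of_sublevel_subset_closedBall {E : Type*}
    [NormedAddCommGroup E] [NormedSpace ℝ E] {f : E → ℝ} (hf : ConvexOn ℝ Set.univ f)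
    {x₀ x : E} {ε δ : ℝ} (hε : 0 < ε) (hδ : 0 < δ)
    (hsub : {y | f y ≤ f x₀ + ε} ⊆ Metric.closedBall x₀ δ) (hx : f x₀ + ε < f x) :
    ε / δ * dist x₀ x ≤ f x - f x₀ := by
  by_contra! hlt
  set s := ε / (f x - f x₀)
  have hs₀ : 0 < s := div_pos hε (by linarith)
  have hs₁ : s < 1 := (div_lt_one (by linarith)).2 (by linarith)
  have hfs : f (AffineMap.lineMap x₀ x s) ≤ f x₀ + ε := by
    have hsF : s * (f x - f x₀) = ε := div_mul_cancel₀ ε (by linarith)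
    have := hf.2 (Set.mem_univ x₀) (Set.mem_univ x) (sub_nonneg.2 hs₁.le) hs₀.le (by ring)
    rw [AffineMap.lineMap_apply_module]
    simp only [smul_eq_mul] at this
    linarith
  have hfar : δ < dist (AffineMap.lineMap x₀ x s) x₀ := by
    rw [dist_lineMap_left, Real.norm_of_nonneg hs₀.le, div_mul_eq_mul_div,
      lt_div_iff₀ (by linarith)]
    rwa [div_mul_eq_mul_div, lt_div_iff₀ hδ, mul_comm] at hlt
  exact (hsub hfs).not_gt hfar

theorem InnerProductGeometry.angle_le_arccos_of_mul_norm_le_inner {V : Type*}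
    [NormedAddCommGroup V] [InnerProductSpace ℝ V] {u v : V} {a L : ℝ} (ha : 0 < a)
    (hv : v ≠ 0) (hu : ‖u‖ ≤ L) (h : a * ‖v‖ ≤ ⟪u, v⟫) :
    angle u v ≤ Real.arccos (a / L) := by
  have hv₀ : 0 < ‖v‖ := norm_pos_iff.2 hv
  have hu₀ : 0 < ‖u‖ := by
    by_contra! hu₀
    have := (real_inner_le_norm u v).trans (mul_nonpos_of_nonpos_of_nonneg hu₀ hv₀.le)
    nlinarith
  apply Real.arccos_le_arccos
  calc a / L ≤ a / ‖u‖ := div_le_div_of_nonneg_left ha.le hu₀ hu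
    _ = a * ‖v‖ / (‖u‖ * ‖v‖) := by field_simp
    _ ≤ ⟪u, v⟫ / (‖u‖ * ‖v‖) := by gcongr

theorem subgrad_angle_bound_general (d : ℕ) (f : EuclideanSpace ℝ (Fin d) → ℝ)
    (xstar : EuclideanSpace ℝ (Fin d)) (L ε δ : ℝ)
    (hconv : ConvexOn ℝ Set.univ f)
    (hL : ∀ x g : EuclideanSpace ℝ (Fin d),
      (∀ y, f x + ⟪g, y - x⟫ ≤ f y) → ‖g‖ ≤ L)
    (hε : 0 < ε) (hδ : 0 < δ)
    (hsub : {x | f x ≤ f xstar + ε} ⊆ Metric.closedBall xstar δ) :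
    ∀ x : EuclideanSpace ℝ (Fin d), x ∉ {x | f x ≤ f xstar + ε} →
      ∀ g : EuclideanSpace ℝ (Fin d), (∀ y, f x + ⟪g, y - x⟫ ≤ f y) →
        angle (-g) (xstar - x) ≤ Real.arccos (ε / (L * δ)) ∧
        Real.arccos (ε / (L * δ)) < Real.pi / 2 := by
  intro x hx g hg
  have hfx : f xstar + ε < f x := not_le.1 hx
  have hne : xstar - x ≠ 0 := sub_ne_zero.2 fun h ↦ by rw [h] at hfx; linarith
  have hgrowth : ε / δ * ‖xstar - x‖ ≤ ⟪-g, xstar - x⟫ := by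
    rw [← dist_eq_norm, inner_neg_left]
    linarith [hconv.div_mul_dist_le_sub_of_sublevel_subset_closedBall hε hδ hsub hfx, hg xstar]
  have hgL := hL x g hg
  have hratio : 0 < ε / (L * δ) := by
    have hεL : ε / δ ≤ L := le_of_mul_le_mul_right
      ((hgrowth.trans (real_inner_le_norm _ _)).trans (by rw [norm_neg]; gcongr))
      (norm_pos_iff.2 hne)
    have : 0 < L := (div_pos hε hδ).trans_le hεL
    positivity
  refine ⟨?_, Real.arccos_lt_pi_div_two.2 hratio⟩
  rw [mul_comm, ← div_div]
  exact angle_le_arccos_of_mul_norm_le_inner (div_pos hε hδ) hne (by rwa [norm_neg]) hgrowth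

theorem subgrad_angle_bound (d : ℕ) (f : EuclideanSpace ℝ (Fin d) → ℝ)
    (xstar : EuclideanSpace ℝ (Fin d)) (L ε δ : ℝ)
    (hconv : ConvexOn ℝ Set.univ f)
    (hmin : ∀ y, f xstar ≤ f y)
    (hL : ∀ x g : EuclideanSpace ℝ (Fin d),
      (∀ y, f x + ⟪g, y - x⟫ ≤ f y) → ‖g‖ ≤ L)
    (hε : 0 < ε) (hδ : 0 < δ)
    (hsub : {x | f x ≤ f xstar + ε} ⊆ Metric.closedBall xstar δ) :
    ∀ x : EuclideanSpace ℝ (Fin d), x ∉ {x | f x ≤ f xstar + ε} →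
      ∀ g : EuclideanSpace ℝ (Fin d), (∀ y, f x + ⟪g, y - x⟫ ≤ f y) →
        angle (-g) (xstar - x) ≤ Real.arccos (ε / (L * δ)) ∧
        Real.arccos (ε / (L * δ)) < Real.pi / 2 :=
  subgrad_angle_bound_general d f xstar L ε δ hconv hL hε hδ hsub
end

section
/- Let {η̂[k]}_{k≥0} be a sequence of nonnegative reals with ∑_{k=0}^∞ η̂[k] = ∞. Let γ₁ ≥ 0, γ₂ > 0, and λ ∈ (-1, 1). Then there is no sequence {u[k]}_{k≥0} of nonnegative reals satisfying u[k+1]² = (u[k] + γ₁ λ^k)² − γ₂ η̂[k] for all k ≥ 0. -/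
/-! If `u ≥ 0` and `u (k+1)² = (u k + a k)² - b k` with `b ≥ 0` and `∑ |a k| < ∞`, then each step
gives `u (k+1) ≤ u k + |a k|`, so `u` is bounded by `M = u 0 + ∑ |a k|`. Telescoping the squares
then bounds `∑ b k` by `u 0² + 2M ∑ |a k|`, which is incompatible with `∑ γ₂ η̂ k = ∞`
for `a k = γ₁ λᵏ` and `b k = γ₂ η̂ k`. -/

open Finset Filter

lemma le_add_abs_of_sq_eq_sq_sub {x y a b : ℝ} (hx : 0 ≤ x) (hb : 0 ≤ b)
    (h : y ^ 2 = (x + a) ^ 2 - b) : y ≤ x + |a| :=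
  calc y ≤ |y| := le_abs_self y
    _ ≤ |x + a| := sq_le_sq.mp (by linarith)
    _ ≤ |x| + |a| := abs_add_le x a
    _ = x + |a| := by rw [abs_of_nonneg hx]

section SqRecursion

variable {u a b : ℕ → ℝ}

lemma add_abs_le_add_tsum_of_succ_le (ha : Summable fun k => |a k|)
    (hstep : ∀ k, u (k + 1) ≤ u k + |a k|) (k : ℕ) :
    u k + |a k| ≤ u 0 + ∑' j, |a j| := by
  have htel : u k - u 0 ≤ ∑ j ∈ range k, |a j| := by
    rw [← sum_range_sub]
    exact sum_le_sum fun j _ => by linarith [hstep j]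
  have hpartial : ∑ j ∈ range (k + 1), |a j| ≤ ∑' j, |a j| :=
    ha.sum_le_tsum _ fun j _ => abs_nonneg (a j)
  rw [sum_range_succ] at hpartial
  linarith

theorem sum_range_le_of_sq_eq_sq_sub (hu : ∀ k, 0 ≤ u k) (hb : ∀ k, 0 ≤ b k)
    (ha : Summable fun k => |a k|) (hrec : ∀ k, u (k + 1) ^ 2 = (u k + a k) ^ 2 - b k) (n : ℕ) :
    ∑ k ∈ range n, b k ≤ u 0 ^ 2 + 2 * (u 0 + ∑' j, |a j|) * ∑' j, |a j| := by
  set M := u 0 + ∑' j, |a j|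
  have hM : ∀ k, u k + |a k| ≤ M := add_abs_le_add_tsum_of_succ_le ha
    fun k => le_add_abs_of_sq_eq_sq_sub (hu k) (hb k) (hrec k)
  have hstep : ∀ k, b k ≤ u k ^ 2 - u (k + 1) ^ 2 + 2 * M * |a k| := by
    intro k
    have hcross : a k * u k ≤ |a k| * u k := mul_le_mul_of_nonneg_right (le_abs_self _) (hu k)
    have hbound : |a k| * (u k + |a k|) ≤ |a k| * M := mul_le_mul_of_nonneg_left (hM k) (abs_nonneg _)
    nlinarith [hrec k, sq_abs (a k), hu k]
  have hsum : ∑ k ∈ range n, b k ≤ u 0 ^ 2 - u n ^ 2 + 2 * M * ∑ k ∈ range n, |a k| := by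
    calc ∑ k ∈ range n, b k
        ≤ ∑ k ∈ range n, (u k ^ 2 - u (k + 1) ^ 2 + 2 * M * |a k|) := sum_le_sum fun k _ => hstep k
      _ = u 0 ^ 2 - u n ^ 2 + 2 * M * ∑ k ∈ range n, |a k| := by
        rw [sum_add_distrib, sum_range_sub', mul_sum]
  have hM0 : 0 ≤ M := (add_nonneg (hu 0) (abs_nonneg (a 0))).trans (hM 0)
  have hpartial : ∑ k ∈ range n, |a k| ≤ ∑' j, |a j| := ha.sum_le_tsum _ fun j _ => abs_nonneg _
  nlinarith [sq_nonneg (u n), mul_le_mul_of_nonneg_left hpartial (by linarith : 0 ≤ 2 * M)]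

end SqRecursion

theorem no_nonneg_sequence_general (η : ℕ → ℝ) (hη : ∀ k, 0 ≤ η k)
    (hdiv : Filter.Tendsto (fun n => ∑ k ∈ Finset.range n, η k) Filter.atTop Filter.atTop)
    (γ₁ γ₂ lam : ℝ) (hγ₂ : 0 < γ₂) (hlam₁ : -1 < lam) (hlam₂ : lam < 1) :
    ¬ ∃ u : ℕ → ℝ, (∀ k, 0 ≤ u k) ∧
      ∀ k, (u (k + 1)) ^ 2 = (u k + γ₁ * lam ^ k) ^ 2 - γ₂ * η k := by
  rintro ⟨u, hu, hrec⟩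
  have hgeom : Summable fun k => |γ₁ * lam ^ k| := by
    simpa only [abs_mul, abs_pow] using
      (summable_geometric_of_lt_one (abs_nonneg lam) (abs_lt.mpr ⟨hlam₁, hlam₂⟩)).mul_left |γ₁|
  have hbound := sum_range_le_of_sq_eq_sq_sub hu (fun k => mul_nonneg hγ₂.le (hη k)) hgeom hrec
  simp_rw [← mul_sum] at hbound
  exact not_bddAbove_of_tendsto_atTop (hdiv.const_mul_atTop hγ₂) ⟨_, Set.forall_mem_range.mpr hbound⟩

theorem no_nonneg_sequence (η : ℕ → ℝ) (hη : ∀ k, 0 ≤ η k)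
    (hdiv : Filter.Tendsto (fun n => ∑ k ∈ Finset.range n, η k) Filter.atTop Filter.atTop)
    (γ₁ γ₂ lam : ℝ) (hγ₁ : 0 ≤ γ₁) (hγ₂ : 0 < γ₂) (hlam₁ : -1 < lam) (hlam₂ : lam < 1) :
    ¬ ∃ u : ℕ → ℝ, (∀ k, 0 ≤ u k) ∧
      ∀ k, (u (k + 1)) ^ 2 = (u k + γ₁ * lam ^ k) ^ 2 - γ₂ * η k :=
  no_nonneg_sequence_general η hη hdiv γ₁ γ₂ lam hγ₂ hlam₁ hlam₂
end
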